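/- If each formula in a nonempty finite list of formulas is a literal (a letter or a negated letter) and the list contains both some letter L and its negation ¬L, then the disjunction of the list is provable in the system with axiom A ∨ ¬A ∨ B̄ and the permutation rule. -/

import Mathlib

/-- Propositional formulas built from letters by negation and disjunction. -/
inductive Fm where
  | letter : ℕ → Fm
  | neg : Fm → Fm
  | or : Fm → Fm → Fm
deriving DecidableEq

/-- Boolean evaluation under a valuation of the letters. -/
def Fm.eval (v : ℕ → Bool) : Fm → Bool
  | .letter n => v n
  | .neg a => !(a.eval v)
  | .or a b => a.eval v || b.eval v

/-- A formula is a tautology if it is true under every valuation. -/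
def Taut (A : Fm) : Prop := ∀ v : ℕ → Bool, A.eval v = true

/-- Right-associated disjunction `A ∨ B₁ ∨ ⋯ ∨ Bₙ` (the list possibly empty). -/
def disj : Fm → List Fm → Fm
  | A, [] => A
  | A, B :: l => .or A (disj B l)

/-- Provability: axiom scheme `A ∨ ¬A ∨ B̄`, rules: permutation of disjuncts,
associativity, double negation introduction, De Morgan. -/
inductive Prov : Fm → Prop where
  | ax (A : Fm) (l : List Fm) : Prov (disj A (.neg A :: l))
  | perm (A B : Fm) (l l' : List Fm) : (A :: l).Perm (B :: l') →
      Prov (disj A l) → Prov (disj B l')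
  | assoc (A B : Fm) (l : List Fm) :
      Prov (disj A (B :: l)) → Prov (disj (.or A B) l)
  | dneg (A : Fm) (l : List Fm) :
      Prov (disj A l) → Prov (disj (.neg (.neg A)) l)
  | demorgan (A B : Fm) (l : List Fm) :
      Prov (disj (.neg A) l) → Prov (disj (.neg B) l) →
      Prov (disj (.neg (.or A B)) l)

/-- The subsystem with only the axiom scheme and the permutation rule. -/
inductive ProvP : Fm → Prop where
  | ax (A : Fm) (l : List Fm) : ProvP (disj A (.neg A :: l))
  | perm (A B : Fm) (l l' : List Fm) : (A :: l).Perm (B :: l') →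
      ProvP (disj A l) → ProvP (disj B l')

/-- A literal is a letter or a negated letter. -/
def IsLit (A : Fm) : Prop := ∃ n, A = Fm.letter n ∨ A = Fm.neg (Fm.letter n)

theorem List.exists_perm_cons_cons {α : Type*} [DecidableEq α] {a b : α} {l : List α}
    (ha : a ∈ l) (hb : b ∈ l) (hab : a ≠ b) : ∃ r, l.Perm (a :: b :: r) :=
  ⟨(l.erase a).erase b, (List.perm_cons_erase ha).trans
    ((List.perm_cons_erase ((List.mem_erase_of_ne hab.symm).2 hb)).cons a)⟩

theorem Fm.neg_ne_self (C : Fm) : Fm.neg C ≠ C := by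
  induction C <;> simp_all

theorem ProvP.of_mem_of_neg_mem {C A : Fm} {l : List Fm} (hC : C ∈ A :: l)
    (hnC : Fm.neg C ∈ A :: l) : ProvP (disj A l) := by
  obtain ⟨r, hr⟩ := List.exists_perm_cons_cons hC hnC (Fm.neg_ne_self C).symm
  exact .perm C A _ l hr.symm (.ax C r)

theorem literals_provable_general (A : Fm) (l : List Fm)
    (L : ℕ) (h1 : Fm.letter L ∈ A :: l) (h2 : Fm.neg (Fm.letter L) ∈ A :: l) :
    ProvP (disj A l) :=
  ProvP.of_mem_of_neg_mem h1 h2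

theorem literals_provable (A : Fm) (l : List Fm) (hlit : ∀ B ∈ A :: l, IsLit B)
    (L : ℕ) (h1 : Fm.letter L ∈ A :: l) (h2 : Fm.neg (Fm.letter L) ∈ A :: l) :
    ProvP (disj A l) :=
  literals_provable_general A l L h1 h2
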